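/- arXiv:2203.04862 — 3 statements merged into one kernel-verified Lean document; each statement's English description precedes it below -/
import Mathlib

section
/- A linear map D on d×d complex matrices is Hermitian-preserving and trace-scaling if and only if there exist finitely many quantum channels D_1,…,D_m on d×d matrices and real numbers c_1,…,c_m such that D = Σ_j c_j·D_j. -/
open Matrix
open scoped Kronecker ComplexOrder

abbrev MatC (n : Type*) := Matrix n n ℂ

/-- A linear map on matrices is Hermitian-preserving if it sends Hermitian
matrices to Hermitian matrices. -/
def IsHermitianPreserving {n : Type*} [Fintype n] [DecidableEq n]
    (M : MatC n →ₗ[ℂ] MatC n) : Prop :=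
  ∀ X : MatC n, X.IsHermitian → (M X).IsHermitian

/-- A linear map on matrices is trace-scaling if it scales the trace by a fixed
real factor. -/
def IsTraceScaling {n : Type*} [Fintype n] [DecidableEq n]
    (M : MatC n →ₗ[ℂ] MatC n) : Prop :=
  ∃ p : ℝ, ∀ X : MatC n, (M X).trace = (p : ℂ) * X.trace

/-- The Choi matrix `J_M = Σ_{i,j} |i⟩⟨j| ⊗ M(|i⟩⟨j|)` of a linear map on matrices. -/
def choi {n : Type*} [Fintype n] [DecidableEq n]
    (M : MatC n →ₗ[ℂ] MatC n) : Matrix (n × n) (n × n) ℂ :=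
  Matrix.of fun p q => M (Matrix.single p.1 q.1 1) p.2 q.2

/-- A quantum channel is a completely positive (positive semidefinite Choi matrix)
trace-preserving linear map. -/
def IsQuantumChannel {n : Type*} [Fintype n] [DecidableEq n]
    (M : MatC n →ₗ[ℂ] MatC n) : Prop :=
  (choi M).PosSemidef ∧ ∀ X : MatC n, (M X).trace = X.trace

/-- `Md` is the adjoint of `M` with respect to the Hilbert-Schmidt inner product
`⟨A, B⟩ = tr[A† B]`. -/
def IsAdjointPair {n : Type*} [Fintype n] [DecidableEq n]
    (M Md : MatC n →ₗ[ℂ] MatC n) : Prop :=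
  ∀ A B : MatC n, (Aᴴ * M B).trace = ((Md A)ᴴ * B).trace

/-- A density matrix: positive semidefinite with unit trace. -/
def IsDensityMatrix {n : Type*} [Fintype n] [DecidableEq n] (ρ : MatC n) : Prop :=
  ρ.PosSemidef ∧ ρ.trace = 1

/-- The Hermitian matrices as a real submodule of the complex matrices. -/
noncomputable def hermSubmodule (n : Type*) [Fintype n] [DecidableEq n] :
    Submodule ℝ (MatC n) :=
  selfAdjoint.submodule ℝ (MatC n)

/-- The image of the Hermitian matrices under a (complex-)linear map, as a real
submodule. -/
noncomputable def hermitianImage {n : Type*} [Fintype n] [DecidableEq n]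
    (M : MatC n →ₗ[ℂ] MatC n) : Submodule ℝ (MatC n) :=
  (hermSubmodule n).map (M.restrictScalars ℝ)

/-!
An HP map `D` has a Hermitian Choi matrix `J`, and the completely depolarizing channel `Δ` has
Choi matrix `d⁻¹ • 1`. For `s` large, `J + (s - p) d⁻¹ • 1` is positive semidefinite, so
`Ψ = s⁻¹ • (D + (s - p) • Δ)` is completely positive, and it preserves traces because `D` scales
them by `p`. Hence `D = s • Ψ + (p - s) • Δ`. Conversely, channels are HP and trace-preserving,
and both properties survive real linear combinations.
-/

open Filter
open scoped ComplexStarModule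

section
open scoped MatrixOrder Matrix.Norms.L2Operator

theorem Matrix.IsHermitian.eventually_posSemidef_smul_one_add {m : Type*} [Fintype m]
    [DecidableEq m] {A : Matrix m m ℂ} (hA : A.IsHermitian) :
    ∀ᶠ t : ℝ in atTop, ((t : ℂ) • 1 + A).PosSemidef := by
  filter_upwards [eventually_ge_atTop ‖A‖] with t ht
  have hA' : (algebraMap ℝ (Matrix m m ℂ) ‖A‖ + A).PosSemidef := by
    rw [← nonneg_iff_posSemidef, ← neg_le_iff_add_nonneg']
    exact IsSelfAdjoint.neg_algebraMap_norm_le_self hA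
  have hdiff : (((t - ‖A‖ : ℝ) : ℂ) • (1 : Matrix m m ℂ)).PosSemidef :=
    PosSemidef.one.smul (by exact_mod_cast sub_nonneg.mpr ht)
  convert hdiff.add hA' using 1
  rw [Algebra.algebraMap_eq_smul_one, ← add_assoc, ← Complex.coe_smul, ← add_smul]
  push_cast; ring_nf
end

section
variable {n : Type*} [Fintype n] [DecidableEq n]

theorem choi_add (M N : MatC n →ₗ[ℂ] MatC n) : choi (M + N) = choi M + choi N := rfl

theorem choi_smul (c : ℂ) (M : MatC n →ₗ[ℂ] MatC n) : choi (c • M) = c • choi M := rfl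

theorem map_eq_sum_single (M : MatC n →ₗ[ℂ] MatC n) (X : MatC n) :
    M X = ∑ i, ∑ j, X i j • M (single i j 1) := by
  conv_lhs => rw [matrix_eq_sum_single X]
  simp only [map_sum, ← map_smul, smul_single, smul_eq_mul, mul_one]

theorem IsHermitianPreserving.map_conjTranspose {M : MatC n →ₗ[ℂ] MatC n}
    (hM : IsHermitianPreserving M) (X : MatC n) : M Xᴴ = (M X)ᴴ := by
  have hre : (ℜ X : MatC n)ᴴ = ℜ X := (ℜ X).2
  have him : (ℑ X : MatC n)ᴴ = ℑ X := (ℑ X).2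
  rw [← realPart_add_I_smul_imaginaryPart X]
  simp only [map_add, map_smul, conjTranspose_add, conjTranspose_smul, hre, him,
    (hM _ hre).eq, (hM _ him).eq]

theorem isHermitianPreserving_iff_isHermitian_choi (M : MatC n →ₗ[ℂ] MatC n) :
    IsHermitianPreserving M ↔ (choi M).IsHermitian := by
  constructor
  · intro hM
    ext p q
    simp only [choi, conjTranspose_apply, of_apply]
    rw [← conjTranspose_apply, ← hM.map_conjTranspose, conjTranspose_single,
      star_one]
  · intro hJ X hX
    ext p q
    rw [conjTranspose_apply, map_eq_sum_single]
    simp only [Matrix.sum_apply, Matrix.smul_apply, smul_eq_mul, star_sum, star_mul']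
    rw [Finset.sum_comm]
    refine Finset.sum_congr rfl fun i _ => Finset.sum_congr rfl fun j _ => ?_
    have := congrFun₂ hJ (i, p) (j, q)
    simp only [choi, conjTranspose_apply, of_apply] at this
    rw [this, ← conjTranspose_apply X, hX.eq]

theorem IsQuantumChannel.isHermitianPreserving {M : MatC n →ₗ[ℂ] MatC n}
    (hM : IsQuantumChannel M) : IsHermitianPreserving M :=
  (isHermitianPreserving_iff_isHermitian_choi M).mpr hM.1.isHermitian

theorem IsQuantumChannel.isTraceScaling {M : MatC n →ₗ[ℂ] MatC n}
    (hM : IsQuantumChannel M) : IsTraceScaling M :=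
  ⟨1, fun X => by rw [hM.2, Complex.ofReal_one, one_mul]⟩

theorem IsHermitianPreserving.add {M N : MatC n →ₗ[ℂ] MatC n} (hM : IsHermitianPreserving M)
    (hN : IsHermitianPreserving N) : IsHermitianPreserving (M + N) :=
  fun X hX => (hM X hX).add (hN X hX)

theorem IsHermitianPreserving.real_smul {M : MatC n →ₗ[ℂ] MatC n}
    (hM : IsHermitianPreserving M) (r : ℝ) : IsHermitianPreserving ((r : ℂ) • M) :=
  fun X hX => (hM X hX).smul (Complex.conj_ofReal r)

theorem IsTraceScaling.add {M N : MatC n →ₗ[ℂ] MatC n} (hM : IsTraceScaling M)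
    (hN : IsTraceScaling N) : IsTraceScaling (M + N) := by
  obtain ⟨p, hp⟩ := hM
  obtain ⟨q, hq⟩ := hN
  refine ⟨p + q, fun X => ?_⟩
  simp only [LinearMap.add_apply, trace_add, hp, hq]
  push_cast
  ring

theorem IsTraceScaling.real_smul {M : MatC n →ₗ[ℂ] MatC n}
    (hM : IsTraceScaling M) (r : ℝ) : IsTraceScaling ((r : ℂ) • M) := by
  obtain ⟨p, hp⟩ := hM
  refine ⟨r * p, fun X => ?_⟩
  simp only [LinearMap.smul_apply, trace_smul, hp, smul_eq_mul]
  push_cast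
  ring

theorem isHermitianPreserving_and_isTraceScaling_sum {ι : Type*} (s : Finset ι) (c : ι → ℝ)
    (M : ι → MatC n →ₗ[ℂ] MatC n) (hM : ∀ j ∈ s, IsQuantumChannel (M j)) :
    IsHermitianPreserving (∑ j ∈ s, (c j : ℂ) • M j) ∧
      IsTraceScaling (∑ j ∈ s, (c j : ℂ) • M j) :=
  Finset.sum_induction _ (fun N => IsHermitianPreserving N ∧ IsTraceScaling N)
    (fun _ _ hN hN' => ⟨hN.1.add hN'.1, hN.2.add hN'.2⟩)
    ⟨fun _ _ => isHermitian_zero, 0, fun X => by simp⟩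
    fun j hj => ⟨(hM j hj).isHermitianPreserving.real_smul _,
      (hM j hj).isTraceScaling.real_smul _⟩

variable (n) in
noncomputable def depolarizing : MatC n →ₗ[ℂ] MatC n :=
  (traceLinearMap n ℂ ℂ).smulRight ((Fintype.card n : ℂ)⁻¹ • (1 : MatC n))

theorem choi_depolarizing : choi (depolarizing n) = (Fintype.card n : ℂ)⁻¹ • 1 := by
  ext ⟨i, k⟩ ⟨j, l⟩
  by_cases hij : i = j
  · subst hij
    by_cases hkl : k = l <;> simp [choi, depolarizing, one_apply, hkl]
  · simp [choi, depolarizing, one_apply, hij, trace_single_eq_of_ne]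

theorem isQuantumChannel_depolarizing : IsQuantumChannel (depolarizing n) := by
  refine ⟨?_, fun X => ?_⟩
  · rw [choi_depolarizing]
    exact PosSemidef.one.smul (by positivity)
  · rcases isEmpty_or_nonempty n with hn | hn
    · simp [trace]
    · simp [depolarizing, trace_smul, trace_one]

theorem IsHermitianPreserving.exists_eq_smul_add_smul_depolarizing [Nonempty n]
    {D : MatC n →ₗ[ℂ] MatC n} (hD : IsHermitianPreserving D) {p : ℝ}
    (hp : ∀ X : MatC n, (D X).trace = (p : ℂ) * X.trace) :
    ∃ (s : ℝ) (Ψ : MatC n →ₗ[ℂ] MatC n), IsQuantumChannel Ψ ∧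
      D = (s : ℂ) • Ψ + ((p - s : ℝ) : ℂ) • depolarizing n := by
  have hκ : 0 < (Fintype.card n : ℝ)⁻¹ := by simp [Fintype.card_pos]
  have hlarge : Tendsto (fun s : ℝ => (s - p) * (Fintype.card n : ℝ)⁻¹) atTop atTop :=
    (tendsto_atTop_add_const_right _ (-p) tendsto_id).atTop_mul_const hκ
  have hJ := (isHermitianPreserving_iff_isHermitian_choi D).mp hD
  obtain ⟨s, hs, hJs⟩ := ((eventually_gt_atTop 0).and <|
    hlarge.eventually hJ.eventually_posSemidef_smul_one_add).exists
  have hs' : (s : ℂ) ≠ 0 := by exact_mod_cast hs.ne'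
  refine ⟨s, (s : ℂ)⁻¹ • (D + ((s - p : ℝ) : ℂ) • depolarizing n), ⟨?_, fun X => ?_⟩, ?_⟩
  · rw [choi_smul, choi_add, choi_smul, choi_depolarizing]
    convert hJs.smul (inv_nonneg.mpr (by exact_mod_cast hs.le : (0 : ℂ) ≤ s)) using 2
    push_cast
    rw [smul_smul, add_comm]
  · rw [LinearMap.smul_apply, LinearMap.add_apply, LinearMap.smul_apply, trace_smul,
      trace_add, trace_smul, hp, isQuantumChannel_depolarizing.2]
    simp only [smul_eq_mul]
    push_cast
    field_simp
    ring
  · rw [smul_smul, mul_inv_cancel₀ hs', one_smul]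
    push_cast
    module
end

/-- A linear map on matrices is Hermitian-preserving and trace-scaling if and only if
it is a finite real linear combination of quantum channels. -/
theorem stmt2 (d : ℕ) (D : MatC (Fin d) →ₗ[ℂ] MatC (Fin d)) :
    (IsHermitianPreserving D ∧ IsTraceScaling D) ↔
      ∃ (m : ℕ) (c : Fin m → ℝ) (Dj : Fin m → (MatC (Fin d) →ₗ[ℂ] MatC (Fin d))),
        (∀ j, IsQuantumChannel (Dj j)) ∧ D = ∑ j, (c j : ℂ) • Dj j := by
  constructor
  · rintro ⟨hD, p, hp⟩
    rcases isEmpty_or_nonempty (Fin d) with hd | hd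
    · exact ⟨0, Fin.elim0, Fin.elim0, fun j => j.elim0, Subsingleton.elim _ _⟩
    obtain ⟨s, Ψ, hΨ, rfl⟩ := hD.exists_eq_smul_add_smul_depolarizing hp
    exact ⟨2, ![s, p - s], ![Ψ, depolarizing (Fin d)],
      Fin.forall_fin_two.mpr ⟨hΨ, isQuantumChannel_depolarizing⟩, by simp [Fin.sum_univ_two]⟩
  · rintro ⟨m, c, Dj, hDj, rfl⟩
    exact isHermitianPreserving_and_isTraceScaling_sum _ c Dj fun j _ => hDj j
end

section
/- Let M be a quantum channel on d_A×d_A complex matrices and N a quantum channel on d_B×d_B complex matrices, and let M⊗N denote the induced quantum channel on (d_A·d_B)×(d_A·d_B) matrices determined by (M⊗N)(X⊗Y) = M(X)⊗N(Y). Then the effective shadow dimensions multiply: d_s(M⊗N) = d_s(M)·d_s(N); equivalently, ζ(M⊗N) = ζ(M) + ζ(N), where ζ(N) = log(d²/d_s(N)). -/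
open Matrix
open scoped Kronecker ComplexOrder

/-
A channel has a Hermitian Choi matrix, so it commutes with `ᴴ`, and then so does its adjoint.
For a complex-linear `F` commuting with `ᴴ`, the image `V` of the Hermitian matrices consists of
Hermitian matrices and `(a, b) ↦ a + i b` is a real isomorphism `V × V ≃ range F`; hence
`d_s = dim_ℝ V = dim_ℂ (range F)`. The adjoint of `M ⊗ N` acts as `M† ⊗ N†` on Kronecker
products, so through `Mat_A ⊗ Mat_B ≃ Mat_{A×B}` it is the tensor product map `M† ⊗ N†`, whose
rank is the product of the ranks. The logarithmic form follows because `M†` is unital, so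
`d_s(M) > 0`.
-/

open Module
open scoped ComplexStarModule

theorem TensorProduct.finrank_range_map {K V W V' W' : Type*} [Field K]
    [AddCommGroup V] [Module K V] [AddCommGroup W] [Module K W]
    [AddCommGroup V'] [Module K V'] [AddCommGroup W'] [Module K W']
    (f : V →ₗ[K] V') (g : W →ₗ[K] W') :
    finrank K (LinearMap.range (TensorProduct.map f g)) =
      finrank K (LinearMap.range f) * finrank K (LinearMap.range g) := by
  have hfactor : TensorProduct.map f g =
      TensorProduct.mapIncl (LinearMap.range f) (LinearMap.range g) ∘ₗ
        TensorProduct.map f.rangeRestrict g.rangeRestrict :=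
    TensorProduct.ext' fun _ _ => rfl
  rw [hfactor, LinearMap.range_comp_of_range_eq_top _ (LinearMap.range_eq_top.2
      (TensorProduct.map_surjective f.surjective_rangeRestrict g.surjective_rangeRestrict)),
    LinearMap.finrank_range_of_inj (Module.Flat.tensorProduct_mapIncl_injective_of_right _ _),
    Module.finrank_tensorProduct]

theorem Matrix.finrank_range_of_map_kronecker {K l m n p l' m' n' p' : Type*} [Field K]
    [Fintype l] [Fintype m] [Fintype n] [Fintype p]
    [DecidableEq l] [DecidableEq m] [DecidableEq n] [DecidableEq p]
    [Fintype l'] [Fintype m'] [Fintype n'] [Fintype p']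
    [DecidableEq l'] [DecidableEq m'] [DecidableEq n'] [DecidableEq p']
    (F : Matrix (l × n) (m × p) K →ₗ[K] Matrix (l' × n') (m' × p') K)
    (G : Matrix l m K →ₗ[K] Matrix l' m' K) (H : Matrix n p K →ₗ[K] Matrix n' p' K)
    (hF : ∀ A B, F (A ⊗ₖ B) = G A ⊗ₖ H B) :
    finrank K (LinearMap.range F) =
      finrank K (LinearMap.range G) * finrank K (LinearMap.range H) := by
  let e := kroneckerLinearEquiv l m n p K
  let e' := kroneckerLinearEquiv l' m' n' p' K
  have hconj : F ∘ₗ e.toLinearMap = e'.toLinearMap ∘ₗ TensorProduct.map G H :=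
    TensorProduct.ext' hF
  rw [← LinearMap.range_comp_of_range_eq_top F e.range, hconj, LinearMap.range_comp,
    LinearEquiv.finrank_map_eq, TensorProduct.finrank_range_map]

theorem Matrix.kronecker_induction {R m n : Type*} [CommSemiring R]
    [Fintype m] [Fintype n] [DecidableEq m] [DecidableEq n]
    {P : Matrix (m × n) (m × n) R → Prop} (Z : Matrix (m × n) (m × n) R) (zero : P 0)
    (kronecker : ∀ A B, P (A ⊗ₖ B)) (add : ∀ X Y, P X → P Y → P (X + Y)) : P Z := by
  rw [← (kroneckerLinearEquiv m m n n R).apply_symm_apply Z]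
  induction (kroneckerLinearEquiv m m n n R).symm Z using TensorProduct.induction_on with
  | zero => simpa using zero
  | tmul A B => exact kronecker A B
  | add x y hx hy => simpa using add _ _ hx hy

theorem IsSelfAdjoint.eq_zero_of_add_I_smul_eq_zero {A : Type*} [AddCommGroup A] [Module ℂ A]
    [StarAddMonoid A] [StarModule ℂ A] {a b : A} (ha : IsSelfAdjoint a) (hb : IsSelfAdjoint b)
    (hab : a + Complex.I • b = 0) : a = 0 ∧ b = 0 := by
  have hre := congrArg realPart hab
  have him := congrArg _root_.imaginaryPart hab
  simp only [map_add, realPart_I_smul, imaginaryPart_I_smul, ha.imaginaryPart, hb.imaginaryPart,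
    neg_zero, add_zero, zero_add, map_zero] at hre him
  rw [← ha.coe_realPart, ← hb.coe_realPart, hre, him]
  exact ⟨rfl, rfl⟩

theorem LinearMap.finrank_map_selfAdjoint {E E' : Type*}
    [AddCommGroup E] [Module ℂ E] [StarAddMonoid E] [StarModule ℂ E]
    [AddCommGroup E'] [Module ℂ E'] [StarAddMonoid E'] [StarModule ℂ E']
    [FiniteDimensional ℂ E'] (F : E →ₗ[ℂ] E') (hF : ∀ x, F (star x) = star (F x)) :
    finrank ℝ ((selfAdjoint.submodule ℝ E).map (F.restrictScalars ℝ)) =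
      finrank ℂ (LinearMap.range F) := by
  set V := (selfAdjoint.submodule ℝ E).map (F.restrictScalars ℝ)
  have hV_selfAdjoint : ∀ v ∈ V, IsSelfAdjoint v := by
    rintro _ ⟨x, hx, rfl⟩
    exact (hF x).symm.trans (congrArg F hx)
  let φ : V × V →ₗ[ℝ] E' := V.subtype.coprod ((Complex.I • LinearMap.id) ∘ₗ V.subtype)
  have hφ_injective : Function.Injective φ := by
    rw [← LinearMap.ker_eq_bot, LinearMap.ker_eq_bot']
    rintro ⟨⟨a, ha⟩, ⟨b, hb⟩⟩ hab
    obtain ⟨rfl, rfl⟩ :=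
      (hV_selfAdjoint a ha).eq_zero_of_add_I_smul_eq_zero (hV_selfAdjoint b hb) hab
    rfl
  have hφ_range : LinearMap.range φ = (LinearMap.range F).restrictScalars ℝ := by
    apply le_antisymm
    · rintro _ ⟨⟨⟨_, x, -, rfl⟩, ⟨_, y, -, rfl⟩⟩, rfl⟩
      exact ⟨x + Complex.I • y, by simp [φ]⟩
    · rintro _ ⟨x, rfl⟩
      refine ⟨(⟨F (ℜ x), ℜ x, (ℜ x).2, rfl⟩, ⟨F (ℑ x), ℑ x, (ℑ x).2, rfl⟩), ?_⟩
      change F (ℜ x) + Complex.I • F (ℑ x) = F x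
      rw [← map_smul, ← map_add, realPart_add_I_smul_imaginaryPart]
  have hφ_finrank := LinearMap.finrank_range_of_inj hφ_injective
  rw [hφ_range, Module.finrank_prod] at hφ_finrank
  change finrank ℝ (LinearMap.range F) = _ at hφ_finrank
  have hcomplex := Module.finrank_mul_finrank ℝ ℂ (LinearMap.range F)
  rw [Complex.finrank_real_complex] at hcomplex
  omega

theorem finrank_hermitianImage {n : Type*} [Fintype n] [DecidableEq n]
    (F : MatC n →ₗ[ℂ] MatC n) (hF : ∀ X, F Xᴴ = (F X)ᴴ) :
    finrank ℝ (hermitianImage F) = finrank ℂ (LinearMap.range F) :=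
  LinearMap.finrank_map_selfAdjoint F hF

theorem finrank_hermitianImage_pos {n : Type*} [Fintype n] [DecidableEq n] [Nonempty n]
    (F : MatC n →ₗ[ℂ] MatC n) (hF : F 1 = 1) : 0 < finrank ℝ (hermitianImage F) := by
  refine Nat.pos_of_ne_zero fun h => one_ne_zero (α := MatC n) ?_
  rw [Submodule.finrank_eq_zero] at h
  rw [← Submodule.mem_bot ℝ, ← h]
  exact ⟨1, IsSelfAdjoint.one _, hF⟩

theorem map_conjTranspose_of_choi_isHermitian {n : Type*} [Fintype n] [DecidableEq n]
    (M : MatC n →ₗ[ℂ] MatC n) (hM : (choi M).IsHermitian) (X : MatC n) :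
    M Xᴴ = (M X)ᴴ := by
  induction X using Matrix.induction_on' with
  | h_zero => simp
  | h_add X Y hX hY => rw [conjTranspose_add, map_add, map_add, hX, hY, conjTranspose_add]
  | h_std_basis i j x =>
    have hij : M (single j i 1) = (M (single i j 1))ᴴ := by
      ext k l
      exact (hM.apply (j, k) (i, l)).symm
    have hsingle : ∀ (p q : n) (a : ℂ), single p q a = a • single p q 1 := fun p q a => by
      rw [smul_single, smul_eq_mul, mul_one]
    rw [conjTranspose_single, hsingle, hsingle i j, map_smul, map_smul, hij, conjTranspose_smul]

theorem Matrix.map_conjTranspose_of_map_kronecker {R m n : Type*} [CommRing R] [StarRing R]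
    [Fintype m] [Fintype n] [DecidableEq m] [DecidableEq n]
    {F : Matrix (m × n) (m × n) R →ₗ[R] Matrix (m × n) (m × n) R}
    {G : Matrix m m R →ₗ[R] Matrix m m R} {H : Matrix n n R →ₗ[R] Matrix n n R}
    (hF : ∀ A B, F (A ⊗ₖ B) = G A ⊗ₖ H B) (hG : ∀ X, G Xᴴ = (G X)ᴴ) (hH : ∀ X, H Xᴴ = (H X)ᴴ)
    (Z : Matrix (m × n) (m × n) R) : F Zᴴ = (F Z)ᴴ := by
  induction Z using Matrix.kronecker_induction with
  | zero => simp
  | kronecker A B => rw [conjTranspose_kronecker, hF, hF, hG, hH, conjTranspose_kronecker]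
  | add X Y hX hY => rw [conjTranspose_add, map_add, map_add, hX, hY, conjTranspose_add]

namespace IsAdjointPair

variable {n : Type*} [Fintype n] [DecidableEq n] {M Md : MatC n →ₗ[ℂ] MatC n}

theorem map_conjTranspose (hMd : IsAdjointPair M Md) (hM : ∀ X, M Xᴴ = (M X)ᴴ)
    (A : MatC n) : Md Aᴴ = (Md A)ᴴ := by
  rw [← conjTranspose_conjTranspose (Md Aᴴ)]
  congr 1
  rw [ext_iff_trace_mul_right]
  intro B
  calc ((Md Aᴴ)ᴴ * B).trace = (A * M B).trace := by rw [← hMd, conjTranspose_conjTranspose]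
    _ = star (Aᴴ * M Bᴴ).trace := by
      rw [hM, ← conjTranspose_mul, trace_conjTranspose, star_star, trace_mul_comm]
    _ = (Md A * B).trace := by
      rw [hMd, ← trace_conjTranspose, conjTranspose_mul, conjTranspose_conjTranspose,
        conjTranspose_conjTranspose, trace_mul_comm]

theorem map_one (hMd : IsAdjointPair M Md) (hM : ∀ X, (M X).trace = X.trace) : Md 1 = 1 := by
  apply conjTranspose_injective
  rw [ext_iff_trace_mul_right]
  intro B
  rw [← hMd, conjTranspose_one, one_mul, one_mul, hM]

theorem map_kronecker {m : Type*} [Fintype m] [DecidableEq m]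
    {N Nd : MatC m →ₗ[ℂ] MatC m} {T Td : MatC (n × m) →ₗ[ℂ] MatC (n × m)}
    (hMd : IsAdjointPair M Md) (hNd : IsAdjointPair N Nd) (hTd : IsAdjointPair T Td)
    (hT : ∀ X Y, T (X ⊗ₖ Y) = M X ⊗ₖ N Y) (A : MatC n) (B : MatC m) :
    Td (A ⊗ₖ B) = Md A ⊗ₖ Nd B := by
  apply conjTranspose_injective
  rw [ext_iff_trace_mul_right]
  intro Z
  rw [← hTd]
  induction Z using Matrix.kronecker_induction with
  | zero => simp
  | kronecker X Y =>
    rw [hT, conjTranspose_kronecker, conjTranspose_kronecker, ← mul_kronecker_mul,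
      ← mul_kronecker_mul, trace_kronecker, trace_kronecker, hMd, hNd]
  | add X Y hX hY => rw [map_add, Matrix.mul_add, Matrix.mul_add, trace_add, trace_add, hX, hY]

end IsAdjointPair

/-- **Additivity of shadow destructivity.** If `T` is the tensor product channel
`M ⊗ N` (characterized by `T (X ⊗ₖ Y) = M X ⊗ₖ N Y`), then the effective shadow
dimensions multiply, `d_s(M⊗N) = d_s(M)·d_s(N)`; equivalently the shadow
destructivities add, `ζ(M⊗N) = ζ(M) + ζ(N)`. -/
theorem stmt10 (dA dB : ℕ) (hdA : 0 < dA) (hdB : 0 < dB)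
    (M Md : MatC (Fin dA) →ₗ[ℂ] MatC (Fin dA))
    (N Nd : MatC (Fin dB) →ₗ[ℂ] MatC (Fin dB))
    (T Td : MatC (Fin dA × Fin dB) →ₗ[ℂ] MatC (Fin dA × Fin dB))
    (hM : IsQuantumChannel M) (hN : IsQuantumChannel N)
    (hMd : IsAdjointPair M Md) (hNd : IsAdjointPair N Nd) (hTd : IsAdjointPair T Td)
    (hT : ∀ (X : MatC (Fin dA)) (Y : MatC (Fin dB)), T (X ⊗ₖ Y) = (M X) ⊗ₖ (N Y)) :
    Module.finrank ℝ (hermitianImage Td) =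
      Module.finrank ℝ (hermitianImage Md) * Module.finrank ℝ (hermitianImage Nd) ∧
    Real.log (((dA * dB) ^ 2 : ℝ) / (Module.finrank ℝ (hermitianImage Td) : ℝ)) =
      Real.log ((dA ^ 2 : ℝ) / (Module.finrank ℝ (hermitianImage Md) : ℝ)) +
      Real.log ((dB ^ 2 : ℝ) / (Module.finrank ℝ (hermitianImage Nd) : ℝ)) := by
  have hMd_star := hMd.map_conjTranspose (map_conjTranspose_of_choi_isHermitian M hM.1.1)
  have hNd_star := hNd.map_conjTranspose (map_conjTranspose_of_choi_isHermitian N hN.1.1)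
  have hTd_kronecker := hMd.map_kronecker hNd hTd hT
  have hTd_star := Matrix.map_conjTranspose_of_map_kronecker hTd_kronecker hMd_star hNd_star
  have hdim : finrank ℝ (hermitianImage Td) =
      finrank ℝ (hermitianImage Md) * finrank ℝ (hermitianImage Nd) := by
    rw [finrank_hermitianImage Td hTd_star, finrank_hermitianImage Md hMd_star,
      finrank_hermitianImage Nd hNd_star, Matrix.finrank_range_of_map_kronecker Td Md Nd hTd_kronecker]
  have : Nonempty (Fin dA) := ⟨⟨0, hdA⟩⟩
  have : Nonempty (Fin dB) := ⟨⟨0, hdB⟩⟩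
  have hposM := finrank_hermitianImage_pos Md (hMd.map_one hM.2)
  have hposN := finrank_hermitianImage_pos Nd (hNd.map_one hN.2)
  refine ⟨hdim, ?_⟩
  rw [hdim, Nat.cast_mul, mul_pow, ← div_mul_div_comm, Real.log_mul (by positivity) (by positivity)]
end

section
/- Let 0 ≤ ε < 1, 0 ≤ p ≤ 1, let N be the single-qubit generalized amplitude damping channel with Kraus operators E_0 = √p·diag(1, √(1−ε)), E_1 = √p·√ε·|0⟩⟨1|, E_2 = √(1−p)·diag(√(1−ε), 1), E_3 = √(1−p)·√ε·|1⟩⟨0|, and let O be the Pauli matrix X or Y. Then the retrieving cost γ_O(N) equals 1/√(1−ε); that is, the infimum of |c_1| + |c_2| over all pairs of real numbers c_1, c_2 and quantum channels D_1, D_2 such that the map D = c_1·D_1 + c_2·D_2 satisfies tr[D(N(ρ))·O] = tr[ρ·O] for all density matrices ρ is exactly 1/√(1−ε), and it is attained. -/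
open Matrix
open scoped Kronecker ComplexOrder

/-- The linear map `ρ ↦ Σ_i E_i ρ E_i†` given by a finite family of Kraus operators. -/
noncomputable def krausMap {n : Type*} [Fintype n] {k : ℕ} (E : Fin k → Matrix n n ℂ) :
    MatC n →ₗ[ℂ] MatC n where
  toFun ρ := ∑ i, E i * ρ * (E i)ᴴ
  map_add' ρ σ := by
    simp [Matrix.mul_add, Matrix.add_mul, Finset.sum_add_distrib]
  map_smul' c ρ := by
    simp [Matrix.mul_smul, Matrix.smul_mul, Finset.smul_sum]

/-- The Pauli X matrix. -/
def PauliX : MatC (Fin 2) := !![0, 1; 1, 0]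

/-- The Pauli Y matrix. -/
def PauliY : MatC (Fin 2) := !![0, -Complex.I; Complex.I, 0]

/-- The Pauli Z matrix. -/
def PauliZ : MatC (Fin 2) := !![1, 0; 0, -1]

/-- The Kraus operators of the single-qubit generalized amplitude damping channel
with damping factor `ε` and temperature indicator `p`. -/
noncomputable def gadKraus (p ε : ℝ) : Fin 4 → MatC (Fin 2) :=
  ![(Real.sqrt p : ℂ) • !![1, 0; 0, (Real.sqrt (1 - ε) : ℂ)],
    ((Real.sqrt p * Real.sqrt ε : ℝ) : ℂ) • !![0, 1; 0, 0],
    (Real.sqrt (1 - p) : ℂ) • !![(Real.sqrt (1 - ε) : ℂ), 0; 0, 1],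
    ((Real.sqrt (1 - p) * Real.sqrt ε : ℝ) : ℂ) • !![0, 0; 1, 0]]

/-- The single-qubit generalized amplitude damping channel. -/
noncomputable def gad (p ε : ℝ) : MatC (Fin 2) →ₗ[ℂ] MatC (Fin 2) :=
  krausMap (gadKraus p ε)

/-- The set of costs `|c₁| + |c₂|` over all two-channel retrievers for the shadow
information `tr[ρ O]` through the noisy channel `N`: real numbers `c₁, c₂` and
quantum channels `D₁, D₂` such that `D = c₁·D₁ + c₂·D₂` satisfies
`tr[D(N(ρ))·O] = tr[ρ·O]` for every density matrix `ρ`. -/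
def retrCosts {n : Type*} [Fintype n] [DecidableEq n]
    (N : MatC n →ₗ[ℂ] MatC n) (O : MatC n) : Set ℝ :=
  {s | ∃ (c₁ c₂ : ℝ) (D₁ D₂ : MatC n →ₗ[ℂ] MatC n),
    IsQuantumChannel D₁ ∧ IsQuantumChannel D₂ ∧
    (∀ ρ : MatC n, IsDensityMatrix ρ →
      ((((c₁ : ℂ) • D₁ + (c₂ : ℂ) • D₂) (N ρ)) * O).trace = (ρ * O).trace) ∧
    s = |c₁| + |c₂|}

/-! The channel multiplies the off-diagonal entries of `ρ` by `s = √(1−ε)` and keeps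
zero-diagonal matrices zero-diagonal, so for `O ∈ {X, Y}` it scales `O` by `s` in both the
Schrödinger and the Heisenberg picture; hence `D = s⁻¹ · id` retrieves `tr[ρ O]` at cost `1/s`.
Conversely, for the density matrices `ρ± = (1 ± O)/2` we have `tr[(ρ₊ − ρ₋) O] = 2` and
`N(ρ₊ − ρ₋) = s (ρ₊ − ρ₋)`, while `|tr[Dᵢ(ρ₊ − ρ₋) O]| ≤ 2` for every channel `Dᵢ` because
`Dᵢ(ρ±)` are density matrices and `O` is a Hermitian involution; hence
`2 ≤ s · 2 (|c₁| + |c₂|)` for every retriever. -/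

section Retrieval

variable {n : Type*} [Fintype n] [DecidableEq n]

theorem apply_apply_eq_sum_choi (M : MatC n →ₗ[ℂ] MatC n) (σ : MatC n) (a b : n) :
    M σ a b = ∑ i, ∑ j, σ i j * choi M (i, a) (j, b) := by
  conv_lhs => rw [σ.matrix_eq_sum_single]
  simp only [map_sum, Matrix.sum_apply, choi, Matrix.of_apply]
  refine Finset.sum_congr rfl fun i _ => Finset.sum_congr rfl fun j _ => ?_
  rw [← smul_eq_mul, ← Matrix.smul_apply, ← map_smul, Matrix.smul_single, smul_eq_mul, mul_one]

open scoped MatrixOrder in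
theorem posSemidef_apply_of_posSemidef_choi {M : MatC n →ₗ[ℂ] MatC n}
    (hM : (choi M).PosSemidef) {σ : MatC n} (hσ : σ.PosSemidef) : (M σ).PosSemidef := by
  obtain ⟨B, rfl⟩ := CStarAlgebra.nonneg_iff_eq_star_mul_self.mp hσ.nonneg
  -- `C k` is `bₖ ⊗ 1` for the `k`-th row `bₖ` of `B`, so that `M(B†B) = Σₖ (C k)† J_M (C k)`
  let C : n → Matrix (n × n) n ℂ := fun k =>
    Matrix.of fun ia b => if ia.2 = b then B k ia.1 else 0
  have hsum : M (star B * B) = ∑ k, (C k)ᴴ * choi M * C k := by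
    ext a b
    simp only [apply_apply_eq_sum_choi, Matrix.sum_apply, Matrix.mul_apply, Matrix.star_apply,
      Matrix.conjTranspose_apply, C, Matrix.of_apply, Fintype.sum_prod_type,
      apply_ite (star : ℂ → ℂ), star_zero, ite_mul, zero_mul, mul_ite, mul_zero, Finset.sum_ite_eq',
      Finset.mem_univ, if_true, Finset.sum_mul]
    rw [Finset.sum_comm]
    conv_rhs => rw [Finset.sum_comm]
    refine Finset.sum_congr rfl fun j _ => ?_
    rw [Finset.sum_comm]
    exact Finset.sum_congr rfl fun i _ => Finset.sum_congr rfl fun k _ => by ring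
  rw [hsum]
  exact Matrix.posSemidef_sum _ fun k _ => hM.conjTranspose_mul_mul_same (C k)

theorem IsQuantumChannel.isDensityMatrix_apply {D : MatC n →ₗ[ℂ] MatC n}
    (hD : IsQuantumChannel D) {ρ : MatC n} (hρ : IsDensityMatrix ρ) : IsDensityMatrix (D ρ) :=
  ⟨posSemidef_apply_of_posSemidef_choi hD.1 hρ.1, (hD.2 ρ).trans hρ.2⟩

theorem isQuantumChannel_id : IsQuantumChannel (LinearMap.id : MatC n →ₗ[ℂ] MatC n) := by
  refine ⟨?_, fun _ => rfl⟩
  convert Matrix.posSemidef_vecMulVec_self_star fun p : n × n => if p.1 = p.2 then (1 : ℂ) else 0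
  ext ⟨i, k⟩ ⟨j, l⟩
  simp only [choi, Matrix.of_apply, LinearMap.id_apply, Matrix.vecMulVec_apply,
    Matrix.single_apply, Pi.star_apply]
  split_ifs <;> simp_all

theorem trace_mul_one_add_nonneg {O : MatC n} (hO : O.IsHermitian) (hO2 : O * O = 1)
    {τ : MatC n} (hτ : τ.PosSemidef) : 0 ≤ (τ * (1 + O)).trace := by
  have hsq : (1 + O) * (1 + O) = (2 : ℂ) • (1 + O) := by
    rw [add_mul, one_mul, mul_add, mul_one, hO2]; module
  have h := (hτ.conjTranspose_mul_mul_same (1 + O)).trace_nonneg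
  rw [Matrix.conjTranspose_add, Matrix.conjTranspose_one, hO.eq, Matrix.trace_mul_cycle,
    hsq, Matrix.smul_mul, Matrix.trace_smul, Matrix.trace_mul_comm, smul_eq_mul] at h
  exact le_of_mul_le_mul_left (by rwa [mul_zero]) (by norm_num : (0 : ℂ) < 2)

theorem norm_trace_mul_le_one {O : MatC n} (hO : O.IsHermitian) (hO2 : O * O = 1)
    {τ : MatC n} (hτ : IsDensityMatrix τ) : ‖(τ * O).trace‖ ≤ 1 := by
  have hpos := trace_mul_one_add_nonneg hO hO2 hτ.1
  have hneg := trace_mul_one_add_nonneg hO.neg (by rw [neg_mul_neg, hO2]) hτ.1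
  rw [Matrix.mul_add, Matrix.trace_add, Matrix.mul_one, hτ.2] at hpos hneg
  rw [Matrix.mul_neg, Matrix.trace_neg] at hneg
  rw [Complex.nonneg_iff] at hpos hneg
  simp only [Complex.add_re, Complex.add_im, Complex.one_re, Complex.one_im, Complex.neg_re,
    Complex.neg_im, zero_add] at hpos hneg
  rw [← Complex.re_add_im (τ * O).trace, ← hpos.2, Complex.ofReal_zero, zero_mul, add_zero,
    Complex.norm_real, Real.norm_eq_abs, abs_le]
  constructor <;> linarith

theorem isDensityMatrix_inv_card_smul_one_add [Nonempty n] {O : MatC n} (hO : O.IsHermitian)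
    (hO2 : O * O = 1) (hO0 : O.trace = 0) :
    IsDensityMatrix ((Fintype.card n : ℂ)⁻¹ • (1 + O)) := by
  have hcard : (Fintype.card n : ℂ) ≠ 0 := Nat.cast_ne_zero.2 Fintype.card_ne_zero
  refine ⟨?_, ?_⟩
  · have h : (Fintype.card n : ℂ)⁻¹ • (1 + O) =
        (2 * Fintype.card n : ℂ)⁻¹ • ((1 + O)ᴴ * (1 + O)) := by
      rw [Matrix.conjTranspose_add, Matrix.conjTranspose_one, hO.eq, add_mul, one_mul, mul_add,
        mul_one, hO2, mul_inv, mul_comm]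
      module
    rw [h]
    exact (Matrix.posSemidef_conjTranspose_mul_self _).smul (by positivity)
  · rw [Matrix.trace_smul, Matrix.trace_add, Matrix.trace_one, hO0, add_zero, smul_eq_mul,
      inv_mul_cancel₀ hcard]

theorem norm_trace_apply_sub_mul_le_two {D : MatC n →ₗ[ℂ] MatC n} (hD : IsQuantumChannel D)
    {O : MatC n} (hO : O.IsHermitian) (hO2 : O * O = 1) {ρ ρ' : MatC n}
    (hρ : IsDensityMatrix ρ) (hρ' : IsDensityMatrix ρ') : ‖(D (ρ - ρ') * O).trace‖ ≤ 2 := by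
  rw [map_sub, Matrix.sub_mul, Matrix.trace_sub]
  linarith [norm_sub_le (D ρ * O).trace (D ρ' * O).trace,
    norm_trace_mul_le_one hO hO2 (hD.isDensityMatrix_apply hρ),
    norm_trace_mul_le_one hO hO2 (hD.isDensityMatrix_apply hρ')]

theorem one_le_mul_of_mem_retrCosts [Nonempty n] {N : MatC n →ₗ[ℂ] MatC n} {O : MatC n}
    (hO : O.IsHermitian) (hO2 : O * O = 1) (hO0 : O.trace = 0) {s : ℝ} (hs : 0 ≤ s)
    (hN : N O = (s : ℂ) • O) {c : ℝ} (hc : c ∈ retrCosts N O) : 1 ≤ s * c := by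
  obtain ⟨c₁, c₂, D₁, D₂, hD₁, hD₂, hret, rfl⟩ := hc
  set r : ℂ := (Fintype.card n : ℂ)⁻¹
  set ρ := r • (1 + O)
  set ρ' := r • (1 + -O)
  have hρ : IsDensityMatrix ρ := isDensityMatrix_inv_card_smul_one_add hO hO2 hO0
  have hρ' : IsDensityMatrix ρ' := isDensityMatrix_inv_card_smul_one_add hO.neg
    (by rw [neg_mul_neg, hO2]) (by rw [Matrix.trace_neg, hO0, neg_zero])
  have hdiff : ρ - ρ' = (2 * r) • O := by module
  have htrace : ((ρ - ρ') * O).trace = 2 := by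
    rw [hdiff, Matrix.smul_mul, hO2, Matrix.trace_smul, Matrix.trace_one, smul_eq_mul, mul_assoc,
      inv_mul_cancel₀ (Nat.cast_ne_zero.2 Fintype.card_ne_zero), mul_one]
  have hNdiff : N (ρ - ρ') = (s : ℂ) • (ρ - ρ') := by rw [hdiff, map_smul, hN, smul_comm]
  have key : (2 : ℂ) = s * (c₁ * (D₁ (ρ - ρ') * O).trace + c₂ * (D₂ (ρ - ρ') * O).trace) := by
    rw [← htrace, Matrix.sub_mul, Matrix.trace_sub, ← hret ρ hρ, ← hret ρ' hρ', ← Matrix.trace_sub,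
      ← Matrix.sub_mul, ← map_sub, ← map_sub, hNdiff]
    simp only [map_smul, LinearMap.add_apply, LinearMap.smul_apply, Matrix.smul_mul,
      Matrix.add_mul, Matrix.trace_smul, Matrix.trace_add, smul_eq_mul]
  have hbound : 2 ≤ s * (|c₁| * 2 + |c₂| * 2) := calc
    (2 : ℝ) = ‖(2 : ℂ)‖ := by norm_num
    _ ≤ s * (|c₁| * 2 + |c₂| * 2) := by
      rw [key, norm_mul, Complex.norm_real, Real.norm_of_nonneg hs]
      gcongr
      refine (norm_add_le _ _).trans ?_
      rw [norm_mul, norm_mul, Complex.norm_real, Complex.norm_real, Real.norm_eq_abs,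
        Real.norm_eq_abs]
      gcongr
      · exact norm_trace_apply_sub_mul_le_two hD₁ hO hO2 hρ hρ'
      · exact norm_trace_apply_sub_mul_le_two hD₂ hO hO2 hρ hρ'
  linarith

theorem inv_mem_retrCosts {N : MatC n →ₗ[ℂ] MatC n} {O : MatC n} {s : ℝ} (hs : 0 < s)
    (hN : ∀ ρ, (N ρ * O).trace = s * (ρ * O).trace) : s⁻¹ ∈ retrCosts N O := by
  refine ⟨s⁻¹, 0, LinearMap.id, LinearMap.id, isQuantumChannel_id, isQuantumChannel_id,
    fun ρ _ => ?_, by rw [abs_of_pos (inv_pos.2 hs), abs_zero, add_zero]⟩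
  rw [Complex.ofReal_zero, zero_smul, add_zero, LinearMap.smul_apply, LinearMap.id_apply,
    Matrix.smul_mul, Matrix.trace_smul, hN, smul_eq_mul, ← mul_assoc, ← Complex.ofReal_mul,
    inv_mul_cancel₀ hs.ne', Complex.ofReal_one, one_mul]

theorem isLeast_retrCosts_inv [Nonempty n] {N : MatC n →ₗ[ℂ] MatC n} {O : MatC n}
    (hO : O.IsHermitian) (hO2 : O * O = 1) (hO0 : O.trace = 0) {s : ℝ} (hs : 0 < s)
    (hN : N O = (s : ℂ) • O) (hN' : ∀ ρ, (N ρ * O).trace = s * (ρ * O).trace) :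
    IsLeast (retrCosts N O) s⁻¹ :=
  ⟨inv_mem_retrCosts hs hN', fun _ hc =>
    (inv_le_iff_one_le_mul₀' hs).2 (one_le_mul_of_mem_retrCosts hO hO2 hO0 hs.le hN hc)⟩

end Retrieval

section GeneralizedAmplitudeDamping

theorem trace_mul_of_diag_eq_zero (A : MatC (Fin 2)) {O : MatC (Fin 2)} (h₀ : O 0 0 = 0)
    (h₁ : O 1 1 = 0) : (A * O).trace = A 0 1 * O 1 0 + A 1 0 * O 0 1 := by
  simp [Matrix.trace, Matrix.mul_apply, Fin.sum_univ_two, h₀, h₁]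

variable {p ε : ℝ}

theorem gad_apply_of_ne (hp0 : 0 ≤ p) (hp1 : p ≤ 1) (ρ : MatC (Fin 2)) {i j : Fin 2}
    (hij : i ≠ j) : gad p ε ρ i j = Real.sqrt (1 - ε) * ρ i j := by
  have hp : (Real.sqrt p : ℂ) * Real.sqrt p = p := by
    rw [← Complex.ofReal_mul, Real.mul_self_sqrt hp0]
  have hq : (Real.sqrt (1 - p) : ℂ) * Real.sqrt (1 - p) = 1 - p := by
    rw [← Complex.ofReal_mul, Real.mul_self_sqrt (by linarith), Complex.ofReal_sub,
      Complex.ofReal_one]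
  fin_cases i <;> fin_cases j <;> simp only [ne_eq, not_true_eq_false] at hij <;>
    simp [gad, krausMap, gadKraus, Fin.sum_univ_four, Matrix.mul_apply, Fin.sum_univ_two,
      Matrix.vecMul, dotProduct] <;>
    linear_combination (Real.sqrt (1 - ε) * ρ _ _ : ℂ) * (hp + hq)

theorem gad_apply_diag_eq_zero {ρ : MatC (Fin 2)} (h₀ : ρ 0 0 = 0) (h₁ : ρ 1 1 = 0)
    (i : Fin 2) : gad p ε ρ i i = 0 := by
  fin_cases i <;>
    simp [gad, krausMap, gadKraus, Fin.sum_univ_four, Matrix.mul_apply, Fin.sum_univ_two,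
      Matrix.vecMul, dotProduct, h₀, h₁]

theorem gad_eq_smul_of_diag_eq_zero (hp0 : 0 ≤ p) (hp1 : p ≤ 1) {O : MatC (Fin 2)}
    (h₀ : O 0 0 = 0) (h₁ : O 1 1 = 0) : gad p ε O = (Real.sqrt (1 - ε) : ℂ) • O := by
  ext i j
  rw [Matrix.smul_apply, smul_eq_mul]
  by_cases hij : i = j
  · subst hij
    rw [gad_apply_diag_eq_zero h₀ h₁]
    fin_cases i <;> simp [h₀, h₁]
  · exact gad_apply_of_ne hp0 hp1 O hij

theorem trace_gad_mul_of_diag_eq_zero (hp0 : 0 ≤ p) (hp1 : p ≤ 1) {O : MatC (Fin 2)}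
    (h₀ : O 0 0 = 0) (h₁ : O 1 1 = 0) (ρ : MatC (Fin 2)) :
    (gad p ε ρ * O).trace = Real.sqrt (1 - ε) * (ρ * O).trace := by
  rw [trace_mul_of_diag_eq_zero _ h₀ h₁, trace_mul_of_diag_eq_zero _ h₀ h₁,
    gad_apply_of_ne hp0 hp1 ρ zero_ne_one, gad_apply_of_ne hp0 hp1 ρ one_ne_zero]
  ring

end GeneralizedAmplitudeDamping

theorem isHermitian_pauliX : PauliX.IsHermitian :=
  Matrix.IsHermitian.ext fun i j => by fin_cases i <;> fin_cases j <;> simp [PauliX]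

theorem pauliX_mul_self : PauliX * PauliX = 1 := by
  ext i j; fin_cases i <;> fin_cases j <;> simp [PauliX]

theorem trace_pauliX : PauliX.trace = 0 := by
  simp [PauliX, Matrix.trace, Fin.sum_univ_two]

theorem isHermitian_pauliY : PauliY.IsHermitian :=
  Matrix.IsHermitian.ext fun i j => by fin_cases i <;> fin_cases j <;> simp [PauliY]

theorem pauliY_mul_self : PauliY * PauliY = 1 := by
  ext i j; fin_cases i <;> fin_cases j <;> simp [PauliY]

theorem trace_pauliY : PauliY.trace = 0 := by
  simp [PauliY, Matrix.trace, Fin.sum_univ_two]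

theorem stmt14_general (p ε : ℝ) (hp0 : 0 ≤ p) (hp1 : p ≤ 1) (hε1 : ε < 1)
    (O : MatC (Fin 2)) (hO : O = PauliX ∨ O = PauliY) :
    IsLeast (retrCosts (gad p ε) O) (1 / Real.sqrt (1 - ε)) := by
  obtain ⟨hHerm, hInv, hTr, h₀, h₁⟩ :
      O.IsHermitian ∧ O * O = 1 ∧ O.trace = 0 ∧ O 0 0 = 0 ∧ O 1 1 = 0 := by
    rcases hO with rfl | rfl
    exacts [⟨isHermitian_pauliX, pauliX_mul_self, trace_pauliX, rfl, rfl⟩,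
      ⟨isHermitian_pauliY, pauliY_mul_self, trace_pauliY, rfl, rfl⟩]
  rw [one_div]
  exact isLeast_retrCosts_inv hHerm hInv hTr (Real.sqrt_pos.2 (by linarith))
    (gad_eq_smul_of_diag_eq_zero hp0 hp1 h₀ h₁) (trace_gad_mul_of_diag_eq_zero hp0 hp1 h₀ h₁)

/-- The retrieving cost of the observable `O ∈ {X, Y}` through the generalized
amplitude damping channel is exactly `1/√(1−ε)`, and it is attained. -/
theorem stmt14 (p ε : ℝ) (hp0 : 0 ≤ p) (hp1 : p ≤ 1) (hε0 : 0 ≤ ε) (hε1 : ε < 1)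
    (O : MatC (Fin 2)) (hO : O = PauliX ∨ O = PauliY) :
    IsLeast (retrCosts (gad p ε) O) (1 / Real.sqrt (1 - ε)) :=
  stmt14_general p ε hp0 hp1 hε1 O hO
end
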